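/- arXiv:2410.24106 — 3 statements merged into one kernel-verified Lean document; each statement's English description precedes it below -/
import Mathlib

section
/- Let λ₁ ≥ … ≥ λ_N > 0 and 0 < n < N. Over all vectors (π₁,…,π_N) with 0 < πᵢ ≤ 1 and Σᵢ πᵢ = n, the minimum of Σᵢ λᵢ²(πᵢ⁻¹ − 1) is attained at a vector of the form πᵢ = 1 for i ≤ t and πᵢ = (n−t)λᵢ / Σ_{k=t+1}^N λ_k for i > t, for some t ∈ {0,…,n−1}. -/
/-!
Write `S t = ∑_{k ≥ t} λ_k` and take the least `t` with `(n - t) λ_t ≤ S t`; it exists and is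
`< n` because `t = n - 1` qualifies. With `d = S t / (n - t)` the vector `p` satisfies the KKT
conditions of the convex problem: `λ_i = d p_i` where `i ≥ t`, while `p_i = 1` and `λ_i > d`
where `i < t` (by minimality of `t`). Convexity of `x ↦ λ²/x` then gives
`λ_i²/q_i ≥ λ_i²/p_i + d² (p_i - q_i)` for every feasible `q`, and summing over `i` proves
optimality, since `∑ p_i = ∑ q_i`.
-/

open Finset

lemma sq_div_add_sq_div_sq_mul_sub_le {a p q : ℝ} (hp : 0 < p) (hq : 0 < q) :
    a ^ 2 / p + a ^ 2 / p ^ 2 * (p - q) ≤ a ^ 2 / q := by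
  have hgap : a ^ 2 / q - (a ^ 2 / p + a ^ 2 / p ^ 2 * (p - q))
      = a ^ 2 * (p - q) ^ 2 / (q * p ^ 2) := by
    field_simp
    ring
  have : 0 ≤ a ^ 2 * (p - q) ^ 2 / (q * p ^ 2) := by positivity
  linarith

lemma sq_div_add_sq_mul_sub_le {a d p q : ℝ} (hp : 0 < p) (hq : 0 < q) (hq1 : q ≤ 1)
    (hkkt : (p = 1 ∧ d ^ 2 ≤ a ^ 2) ∨ a = d * p) :
    a ^ 2 / p + d ^ 2 * (p - q) ≤ a ^ 2 / q := by
  refine le_trans ?_ (sq_div_add_sq_div_sq_mul_sub_le hp hq)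
  rcases hkkt with ⟨rfl, hda⟩ | rfl
  · simp only [one_pow, div_one, add_le_add_iff_left]
    exact mul_le_mul_of_nonneg_right hda (by linarith)
  · rw [mul_pow, mul_div_cancel_right₀ _ (by positivity)]

theorem sum_sq_div_le_of_kkt {ι : Type*} [Fintype ι] {a p q : ι → ℝ} (d : ℝ)
    (hp : ∀ i, 0 < p i) (hq : ∀ i, 0 < q i) (hq1 : ∀ i, q i ≤ 1)
    (hsum : ∑ i, q i = ∑ i, p i) (hkkt : ∀ i, (p i = 1 ∧ d ^ 2 ≤ a i ^ 2) ∨ a i = d * p i) :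
    ∑ i, a i ^ 2 / p i ≤ ∑ i, a i ^ 2 / q i := by
  have hmult : ∑ i, d ^ 2 * (p i - q i) = 0 := by
    rw [← mul_sum, sum_sub_distrib, hsum, sub_self, mul_zero]
  calc ∑ i, a i ^ 2 / p i = ∑ i, (a i ^ 2 / p i + d ^ 2 * (p i - q i)) := by
        rw [sum_add_distrib, hmult, add_zero]
    _ ≤ ∑ i, a i ^ 2 / q i :=
        sum_le_sum fun i _ => sq_div_add_sq_mul_sub_le (hp i) (hq i) (hq1 i) (hkkt i)

section Threshold

variable {N : ℕ} (lam : Fin N → ℝ)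

def tailSum (t : ℕ) : ℝ :=
  ∑ k ∈ univ.filter (fun k : Fin N => t ≤ (k : ℕ)), lam k

noncomputable def cappedProportional (n t : ℕ) : Fin N → ℝ := fun i =>
  if (i : ℕ) < t then 1 else ((n : ℝ) - t) * lam i / tailSum lam t

lemma cappedProportional_of_lt {n t : ℕ} {i : Fin N} (hi : (i : ℕ) < t) :
    cappedProportional lam n t i = 1 :=
  if_pos hi

lemma cappedProportional_of_not_lt {n t : ℕ} {i : Fin N} (hi : ¬ (i : ℕ) < t) :
    cappedProportional lam n t i = ((n : ℝ) - t) * lam i / tailSum lam t :=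
  if_neg hi

lemma tailSum_eq_add (t : Fin N) : tailSum lam t = lam t + tailSum lam (t + 1) := by
  have hsplit : univ.filter (fun k : Fin N => (t : ℕ) ≤ k)
      = insert t (univ.filter (fun k : Fin N => (t : ℕ) + 1 ≤ k)) := by
    ext i
    simp only [mem_filter, mem_univ, true_and, mem_insert, Fin.ext_iff]
    omega
  rw [tailSum, hsplit, sum_insert (by simp), tailSum]

lemma tailSum_pos (hpos : ∀ i, 0 < lam i) (t : Fin N) : 0 < tailSum lam t :=
  sum_pos (fun i _ => hpos i) ⟨t, by simp⟩

variable {lam}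

lemma exists_threshold (hpos : ∀ i, 0 < lam i) (hsort : Antitone lam) {n : ℕ} (hn : 0 < n)
    (hnN : n < N) :
    ∃ t : Fin N, (t : ℕ) < n ∧ ((n : ℝ) - t) * lam t ≤ tailSum lam t ∧
      ∀ i : Fin N, i < t → tailSum lam t < ((n : ℝ) - t) * lam i := by
  let P : Fin N → Prop := fun t => (t : ℕ) < n ∧ ((n : ℝ) - t) * lam t ≤ tailSum lam t
  have hlast : P ⟨n - 1, by omega⟩ := by
    refine ⟨by simp only; omega, ?_⟩
    have hsucc : ((⟨n - 1, by omega⟩ : Fin N) : ℕ) + 1 = n := by simp only; omega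
    rw [tailSum_eq_add, hsucc, Nat.cast_sub hn, Nat.cast_one, sub_sub_cancel, one_mul,
      le_add_iff_nonneg_right]
    exact (tailSum_pos lam hpos ⟨n, hnN⟩).le
  obtain ⟨t, ⟨htn, ht⟩, hmin⟩ := exists_minimal_of_wellFoundedLT P ⟨_, hlast⟩
  refine ⟨t, htn, ht, fun i hit => ?_⟩
  let j : Fin N := ⟨t - 1, by omega⟩
  have hjt : j < t := Fin.lt_def.2 (by simp only [j]; omega)
  have hj : tailSum lam j < ((n : ℝ) - j) * lam j := by
    by_contra! h
    exact (Minimal.not_prop_of_lt ⟨⟨htn, ht⟩, hmin⟩ hjt) ⟨by omega, h⟩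
  have hjsucc : (j : ℕ) + 1 = t := by simp only [j]; omega
  have hjcast : ((j : ℕ) : ℝ) = t - 1 := by
    rw [← hjsucc]; push_cast; ring
  rw [tailSum_eq_add, hjsucc, hjcast] at hj
  have hij : lam j ≤ lam i := hsort (Fin.le_def.2 (by simp only [j]; omega))
  have hnt : (0 : ℝ) ≤ n - t := by
    rw [sub_nonneg]; exact_mod_cast htn.le
  nlinarith

lemma cappedProportional_mem_Ioc (hpos : ∀ i, 0 < lam i) (hsort : Antitone lam) {n : ℕ}
    {t : Fin N} (htn : (t : ℕ) < n) (ht : ((n : ℝ) - t) * lam t ≤ tailSum lam t) (i : Fin N) :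
    0 < cappedProportional lam n t i ∧ cappedProportional lam n t i ≤ 1 := by
  have hnt : (0 : ℝ) < n - t := by
    rw [sub_pos]; exact_mod_cast htn
  have hS := tailSum_pos lam hpos t
  unfold cappedProportional
  split_ifs with hit
  · exact ⟨one_pos, le_rfl⟩
  refine ⟨div_pos (mul_pos hnt (hpos i)) hS, (div_le_one hS).2 (le_trans ?_ ht)⟩
  exact mul_le_mul_of_nonneg_left (hsort (Fin.le_def.2 (not_lt.1 hit))) hnt.le

lemma sum_cappedProportional {n : ℕ} {t : Fin N} (hS : tailSum lam t ≠ 0) :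
    ∑ i, cappedProportional lam n t i = n := by
  rw [← sum_filter_add_sum_filter_not univ (fun i : Fin N => (i : ℕ) < t)]
  have hbelow : ∑ i ∈ univ.filter (fun i : Fin N => (i : ℕ) < t), cappedProportional lam n t i
      = t := by
    rw [sum_congr rfl fun i hi => cappedProportional_of_lt lam (mem_filter.1 hi).2, sum_const,
      nsmul_one, ← Fin.card_Iio t]
    congr 2
    ext i
    simp
  have habove : ∑ i ∈ univ.filter (fun i : Fin N => ¬ (i : ℕ) < t), cappedProportional lam n t i
      = n - t := by
    rw [sum_congr rfl fun i hi => cappedProportional_of_not_lt lam (mem_filter.1 hi).2,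
      ← sum_div, ← mul_sum]
    simp only [not_lt]
    rw [← tailSum, mul_div_assoc, div_self hS, mul_one]
  rw [hbelow, habove, add_sub_cancel]

lemma cappedProportional_kkt (hpos : ∀ i, 0 < lam i) {n : ℕ} {t : Fin N} (htn : (t : ℕ) < n)
    (hbelow : ∀ i : Fin N, i < t → tailSum lam t < ((n : ℝ) - t) * lam i) (i : Fin N) :
    (cappedProportional lam n t i = 1 ∧ (tailSum lam t / (n - t)) ^ 2 ≤ lam i ^ 2) ∨
      lam i = tailSum lam t / (n - t) * cappedProportional lam n t i := by
  have hnt : (0 : ℝ) < n - t := by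
    rw [sub_pos]; exact_mod_cast htn
  have hS := tailSum_pos lam hpos t
  unfold cappedProportional
  split_ifs with hit
  · refine Or.inl ⟨rfl, pow_le_pow_left₀ (by positivity) ?_ 2⟩
    exact ((div_lt_iff₀' hnt).2 (hbelow i (Fin.lt_def.2 hit))).le
  · right
    field_simp

end Threshold

/-- Optimal inclusion probabilities for the unbiased estimator: for `λ₁ ≥ … ≥ λ_N > 0` and
`0 < n < N`, the minimum over `{π ∈ (0,1]^N : Σᵢ πᵢ = n}` of `Σᵢ λᵢ²(πᵢ⁻¹ − 1)` is attained
at a vector with `πᵢ = 1` for `i ≤ t` and `πᵢ = (n−t)λᵢ / Σ_{k>t} λ_k` for `i > t`,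
for some `t ∈ {0,…,n−1}`. (Indices are 0-based: `i ≤ t` in the paper is `i.val < t` here.) -/
theorem optimal_unbiased_inclusion_probabilities
    {N n : ℕ} (hn : 0 < n) (hnN : n < N) (lam : Fin N → ℝ)
    (hpos : ∀ i, 0 < lam i)
    (hsort : ∀ i j : Fin N, i ≤ j → lam j ≤ lam i) :
    ∃ t : ℕ, t < n ∧
      (let p : Fin N → ℝ := fun i =>
        if (i : ℕ) < t then 1
        else ((n : ℝ) - t) * lam i /
          ∑ k ∈ Finset.univ.filter (fun k : Fin N => t ≤ (k : ℕ)), lam k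
      (∀ i, 0 < p i ∧ p i ≤ 1) ∧ (∑ i, p i = n) ∧
        ∀ q : Fin N → ℝ, (∀ i, 0 < q i ∧ q i ≤ 1) → (∑ i, q i = n) →
          ∑ i, (lam i) ^ 2 * (1 / p i - 1) ≤ ∑ i, (lam i) ^ 2 * (1 / q i - 1)) := by
  have hanti : Antitone lam := fun i j h => hsort i j h
  obtain ⟨t, htn, ht, hbelow⟩ := exists_threshold hpos hanti hn hnN
  have hfeas := cappedProportional_mem_Ioc hpos hanti htn ht
  have hsum := sum_cappedProportional (n := n) (tailSum_pos lam hpos t).ne'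
  refine ⟨t, htn, hfeas, hsum, fun q hq hqsum => ?_⟩
  have hopt : ∑ i, lam i ^ 2 / cappedProportional lam n t i ≤ ∑ i, lam i ^ 2 / q i :=
    sum_sq_div_le_of_kkt _ (fun i => (hfeas i).1) (fun i => (hq i).1) (fun i => (hq i).2)
      (hqsum.trans hsum.symm) (cappedProportional_kkt hpos htn hbelow)
  simp only [mul_sub, mul_one_div, mul_one, sum_sub_distrib]
  exact sub_le_sub_right hopt _
end

section
/- Let λ₁ ≥ … ≥ λ_N > 0, 0 < n < N, and t ∈ {0,…,n−1} satisfy λ_{t+1} < (Σ_{k=t+1}^N λ_k)/(n−t). Then setting πᵢ = 1 for i ≤ t and πᵢ = (n−t)λᵢ/Σ_{k=t+1}^N λ_k for i > t yields a valid probability vector: 0 < πᵢ ≤ 1 for all i and Σᵢ πᵢ = n. -/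
open Finset

theorem Finset.sum_mul_div_sum_self {ι K : Type*} [DivisionRing K] (s : Finset ι) (w : ι → K)
    (c : K) (hw : ∑ j ∈ s, w j ≠ 0) : ∑ i ∈ s, c * w i / ∑ j ∈ s, w j = c := by
  rw [← sum_div, ← mul_sum, mul_div_assoc, div_self hw, mul_one]

theorem unbiased_probabilities_valid_general
    {N n t : ℕ} (hnN : n < N) (ht : t < n)
    (lam : Fin N → ℝ) (hpos : ∀ i, 0 < lam i)
    (hsort : ∀ i j : Fin N, i ≤ j → lam j ≤ lam i)
    (hcond : lam ⟨t, lt_trans ht hnN⟩ <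
      (∑ k ∈ Finset.univ.filter (fun k : Fin N => t ≤ (k : ℕ)), lam k) / ((n : ℝ) - t)) :
    (let p : Fin N → ℝ := fun i =>
      if (i : ℕ) < t then 1
      else ((n : ℝ) - t) * lam i /
        ∑ k ∈ Finset.univ.filter (fun k : Fin N => t ≤ (k : ℕ)), lam k
    (∀ i, 0 < p i ∧ p i ≤ 1) ∧ ∑ i, p i = n) := by
  intro p
  set tail := univ.filter (fun k : Fin N => t ≤ (k : ℕ))
  set S := ∑ k ∈ tail, lam k
  have hnt : (0 : ℝ) < n - t := sub_pos.mpr (by exact_mod_cast ht)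
  have hS : 0 < S := sum_pos (fun i _ => hpos i) ⟨⟨t, lt_trans ht hnN⟩, by simp [tail]⟩
  have htail_le : ∀ i : Fin N, t ≤ (i : ℕ) → ((n : ℝ) - t) * lam i ≤ S := fun i hi =>
    calc ((n : ℝ) - t) * lam i ≤ (n - t) * lam ⟨t, lt_trans ht hnN⟩ :=
          mul_le_mul_of_nonneg_left (hsort _ i (Fin.le_def.mpr hi)) hnt.le
      _ ≤ S := ((lt_div_iff₀' hnt).mp hcond).le
  refine ⟨fun i => ?_, ?_⟩
  · by_cases hi : (i : ℕ) < t
    · simp [p, hi]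
    · simp only [p, hi, if_false]
      exact ⟨div_pos (mul_pos hnt (hpos i)) hS,
        (div_le_one hS).mpr (htail_le i (Nat.not_lt.mp hi))⟩
  · have hcard_head : #(univ.filter (fun i : Fin N => (i : ℕ) < t)) = t := by
      rw [Fin.card_filter_val_lt, min_eq_right (ht.trans hnN).le]
    have htail : univ.filter (fun i : Fin N => ¬ (i : ℕ) < t) = tail := by ext; simp [tail]
    rw [sum_ite, htail, sum_const, hcard_head, sum_mul_div_sum_self tail lam _ hS.ne']
    simp only [nsmul_eq_mul, mul_one]
    ring

/-- Feasibility of the unbiased-strategy probabilities: if `λ₁ ≥ … ≥ λ_N > 0`, `0 < n < N`,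
`t < n`, and `λ_{t+1} < (Σ_{k>t} λ_k)/(n−t)` (0-based: `lam ⟨t⟩`), then setting `πᵢ = 1` for
`i ≤ t` and `πᵢ = (n−t)λᵢ/Σ_{k>t} λ_k` for `i > t` gives `0 < πᵢ ≤ 1` and `Σᵢ πᵢ = n`. -/
theorem unbiased_probabilities_valid
    {N n t : ℕ} (hn : 0 < n) (hnN : n < N) (ht : t < n)
    (lam : Fin N → ℝ) (hpos : ∀ i, 0 < lam i)
    (hsort : ∀ i j : Fin N, i ≤ j → lam j ≤ lam i)
    (hcond : lam ⟨t, lt_trans ht hnN⟩ <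
      (∑ k ∈ Finset.univ.filter (fun k : Fin N => t ≤ (k : ℕ)), lam k) / ((n : ℝ) - t)) :
    (let p : Fin N → ℝ := fun i =>
      if (i : ℕ) < t then 1
      else ((n : ℝ) - t) * lam i /
        ∑ k ∈ Finset.univ.filter (fun k : Fin N => t ≤ (k : ℕ)), lam k
    (∀ i, 0 < p i ∧ p i ≤ 1) ∧ ∑ i, p i = n) :=
  unbiased_probabilities_valid_general hnN ht lam hpos hsort hcond
end

section
/- Let X₁,…,X_N be pairwise orthogonal with ‖Xᵢ‖ = λᵢ, and for each client c ∈ {1,…,C} let (z₁^{(c)},…,z_N^{(c)}) be i.i.d. copies of indicator vectors with marginals πᵢ. With fixed multipliers wᵢ ∈ ℝ and W̄ = (1/C) Σ_c Σᵢ zᵢ^{(c)} wᵢ Xᵢ, the expected squared error equals E‖Y − W̄‖² = Σᵢ λᵢ² + Σᵢ λᵢ² wᵢ πᵢ (−2 + wᵢ/C + wᵢπᵢ(C−1)/C), where Y = Σᵢ Xᵢ. -/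
/-!
Orthogonality gives `‖Y - W̄‖² = Σᵢ λᵢ² (1 - wᵢ Sᵢ / C)²`, where `Sᵢ = Σ_c zᵢ^{(c)}` counts the
clients that draw `i`. Each `Sᵢ` is a sum of `C` independent Bernoulli(`πᵢ`) variables, so it has
mean `C πᵢ` and variance `C πᵢ (1 - πᵢ)`, and `E (1 - a S)² = a² Var S + (1 - a E S)²`.
-/

open MeasureTheory ProbabilityTheory RealInnerProductSpace

theorem norm_sum_smul_sq_of_pairwise_inner_eq_zero {ι E : Type*} [Fintype ι]
    [NormedAddCommGroup E] [InnerProductSpace ℝ E] {X : ι → E}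
    (horth : ∀ i j, i ≠ j → ⟪X i, X j⟫ = 0) (a : ι → ℝ) :
    ‖∑ i, a i • X i‖ ^ 2 = ∑ i, a i ^ 2 * ‖X i‖ ^ 2 := by
  classical
  rw [← real_inner_self_eq_norm_sq, sum_inner]
  refine Finset.sum_congr rfl fun i _ => ?_
  rw [inner_sum, Finset.sum_eq_single i (fun j _ hji => by
    rw [real_inner_smul_left, real_inner_smul_right, horth i j hji.symm, mul_zero, mul_zero])
    (by simp), real_inner_smul_left, real_inner_smul_right, real_inner_self_eq_norm_sq]
  ring

theorem sum_sub_smul_sum_sum_smul {ι κ E : Type*} [Fintype ι] [Fintype κ]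
    [AddCommGroup E] [Module ℝ E] (X : ι → E) (a : ℝ) (y : κ → ι → ℝ) (w : ι → ℝ) :
    (∑ i, X i) - a • ∑ k, ∑ i, (y k i * w i) • X i
      = ∑ i, (1 - a * w i * ∑ k, y k i) • X i := by
  simp only [sub_smul, one_smul, Finset.sum_sub_distrib, Finset.mul_sum, Finset.sum_smul,
    Finset.smul_sum, smul_smul]
  rw [Finset.sum_comm]
  congr 2 with k
  congr 1 with i
  ring_nf

section

variable {Ω : Type*} [MeasurableSpace Ω] {μ : Measure Ω}

theorem integral_sq_eq_variance_add_sq [IsProbabilityMeasure μ] {S : Ω → ℝ} (hS : MemLp S 2 μ) :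
    ∫ ω, S ω ^ 2 ∂μ = Var[S; μ] + μ[S] ^ 2 := by
  rw [variance_eq_sub hS]
  simp

theorem integral_const_sub_mul_sq [IsProbabilityMeasure μ] {S : Ω → ℝ} (hS : MemLp S 2 μ)
    (b a : ℝ) :
    ∫ ω, (b - a * S ω) ^ 2 ∂μ = a ^ 2 * Var[S; μ] + (b - a * μ[S]) ^ 2 := by
  have hT : MemLp (fun ω => b - a * S ω) 2 μ := (memLp_const b).sub (hS.const_mul a)
  rw [integral_sq_eq_variance_add_sq hT, variance_const_sub (hS.const_mul a).1,
    variance_const_mul, integral_sub (integrable_const b) ((hS.integrable one_le_two).const_mul a),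
    integral_const_mul]
  simp

theorem memLp_two_of_zero_or_one [IsFiniteMeasure μ] {z : Ω → ℝ} (hzm : Measurable z)
    (hz : ∀ ω, z ω = 0 ∨ z ω = 1) : MemLp z 2 μ :=
  MemLp.of_bound hzm.aestronglyMeasurable 1 <| ae_of_all _ fun ω => by
    rcases hz ω with h | h <;> simp [h]

theorem integral_of_zero_or_one {z : Ω → ℝ} (hzm : Measurable z)
    (hz : ∀ ω, z ω = 0 ∨ z ω = 1) : μ[z] = μ.real {ω | z ω = 1} := by
  calc μ[z] = ∫ ω, {ω | z ω = 1}.indicator (1 : Ω → ℝ) ω ∂μ := by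
        refine integral_congr_ae <| ae_of_all _ fun ω => ?_
        rcases hz ω with h | h <;> simp [h]
    _ = μ.real {ω | z ω = 1} := integral_indicator_one (hzm (measurableSet_singleton 1))

theorem variance_of_zero_or_one [IsProbabilityMeasure μ] {z : Ω → ℝ} (hzm : Measurable z)
    (hz : ∀ ω, z ω = 0 ∨ z ω = 1) :
    Var[z; μ] = μ.real {ω | z ω = 1} * (1 - μ.real {ω | z ω = 1}) := by
  have hsq : z ^ 2 = z := by
    funext ω
    rcases hz ω with h | h <;> simp [h]
  rw [variance_eq_sub (memLp_two_of_zero_or_one hzm hz), hsq, integral_of_zero_or_one hzm hz]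
  ring

variable {ι : Type*} [Fintype ι] {z : ι → Ω → ℝ} {p : ℝ}

theorem integral_sum_of_zero_or_one [IsFiniteMeasure μ] (hzm : ∀ c, Measurable (z c))
    (hz : ∀ c ω, z c ω = 0 ∨ z c ω = 1) (hp : ∀ c, μ.real {ω | z c ω = 1} = p) :
    ∫ ω, ∑ c, z c ω ∂μ = Fintype.card ι * p := by
  rw [integral_finsetSum _ fun c _ =>
    (memLp_two_of_zero_or_one (hzm c) (hz c)).integrable one_le_two]
  simp [integral_of_zero_or_one (hzm _) (hz _), hp]

theorem variance_sum_of_zero_or_one [IsProbabilityMeasure μ] (hzm : ∀ c, Measurable (z c))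
    (hz : ∀ c ω, z c ω = 0 ∨ z c ω = 1) (hp : ∀ c, μ.real {ω | z c ω = 1} = p)
    (hindep : Pairwise fun c c' => z c ⟂ᵢ[μ] z c') :
    Var[fun ω => ∑ c, z c ω; μ] = Fintype.card ι * (p * (1 - p)) := by
  rw [← Finset.sum_fn, IndepFun.variance_sum (fun c _ => memLp_two_of_zero_or_one (hzm c) (hz c))
    fun c _ c' _ hcc' => hindep hcc']
  simp [variance_of_zero_or_one (hzm _) (hz _), hp]

end

theorem collective_estimator_frobenius_discrepancy_general
    {Ω : Type*} [MeasurableSpace Ω] (μ : Measure Ω) [IsProbabilityMeasure μ]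
    {E : Type*} [NormedAddCommGroup E] [InnerProductSpace ℝ E]
    {N C : ℕ} (hC : 1 ≤ C) (X : Fin N → E)
    (horth : ∀ i j : Fin N, i ≠ j → ⟪X i, X j⟫ = 0)
    (z : Fin C → Ω → (Fin N → ℝ)) (hzm : ∀ c, Measurable (z c))
    (hz01 : ∀ c ω i, z c ω i = 0 ∨ z c ω i = 1)
    (hindep : iIndepFun z μ)
    (π : Fin N → ℝ) (hπ : ∀ (c : Fin C) (i : Fin N), (μ {ω | z c ω i = 1}).toReal = π i)
    (w : Fin N → ℝ) :
    ∫ ω, ‖(∑ i, X i) - (1 / (C : ℝ)) • ∑ c, ∑ i, (z c ω i * w i) • X i‖ ^ 2 ∂μ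
      = (∑ i, ‖X i‖ ^ 2)
        + ∑ i, ‖X i‖ ^ 2 * w i * π i *
            (-2 + w i / C + w i * π i * ((C : ℝ) - 1) / C) := by
  have hC0 : (C : ℝ) ≠ 0 := Nat.cast_ne_zero.mpr (by omega)
  set S : Fin N → Ω → ℝ := fun i ω => ∑ c, z c ω i
  have hzm' : ∀ i c, Measurable fun ω => z c ω i := fun i c => (measurable_pi_apply i).comp (hzm c)
  have hS : ∀ i, MemLp (S i) 2 μ := fun i =>
    memLp_finsetSum _ fun c _ => memLp_two_of_zero_or_one (hzm' i c) (hz01 c · i)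
  have hmean : ∀ i, μ[S i] = C * π i := fun i => by
    simpa using integral_sum_of_zero_or_one (hzm' i) (hz01 · · i) (hπ · i)
  have hvar : ∀ i, Var[S i; μ] = C * (π i * (1 - π i)) := fun i => by
    simpa using variance_sum_of_zero_or_one (hzm' i) (hz01 · · i) (hπ · i)
      fun c c' hcc' => (hindep.indepFun hcc').comp (measurable_pi_apply i) (measurable_pi_apply i)
  calc _ = ∫ ω, ∑ i, (1 - 1 / C * w i * S i ω) ^ 2 * ‖X i‖ ^ 2 ∂μ := by
        simp_rw [sum_sub_smul_sum_sum_smul, norm_sum_smul_sq_of_pairwise_inner_eq_zero horth]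
        rfl
    _ = ∑ i, ((1 / C * w i) ^ 2 * Var[S i; μ] + (1 - 1 / C * w i * μ[S i]) ^ 2) * ‖X i‖ ^ 2 := by
        rw [integral_finsetSum _ fun i _ =>
          (MemLp.integrable_sq (f := fun ω => 1 - 1 / C * w i * S i ω)
            ((memLp_const 1).sub ((hS i).const_mul _))).mul_const _]
        simp_rw [integral_mul_const, integral_const_sub_mul_sq (hS _)]
    _ = _ := by
        rw [← Finset.sum_add_distrib]
        refine Finset.sum_congr rfl fun i _ => ?_
        rw [hmean, hvar]
        field_simp
        ring

/-- Frobenius discrepancy of the collective estimator: with pairwise orthogonal `Xᵢ`,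
`C` i.i.d. copies of an indicator vector with marginals `πᵢ`, fixed multipliers `wᵢ`, and
`W̄ = (1/C) Σ_c Σᵢ zᵢ^{(c)} wᵢ Xᵢ`,
`E‖Y − W̄‖² = Σᵢ λᵢ² + Σᵢ λᵢ² wᵢ πᵢ (−2 + wᵢ/C + wᵢπᵢ(C−1)/C)`. -/
theorem collective_estimator_frobenius_discrepancy
    {Ω : Type*} [MeasurableSpace Ω] (μ : Measure Ω) [IsProbabilityMeasure μ]
    {E : Type*} [NormedAddCommGroup E] [InnerProductSpace ℝ E]
    {N C : ℕ} (hC : 1 ≤ C) (X : Fin N → E)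
    (horth : ∀ i j : Fin N, i ≠ j → ⟪X i, X j⟫ = 0)
    (z : Fin C → Ω → (Fin N → ℝ)) (hzm : ∀ c, Measurable (z c))
    (hz01 : ∀ c ω i, z c ω i = 0 ∨ z c ω i = 1)
    (hindep : iIndepFun z μ)
    (hident : ∀ c c' : Fin C, Measure.map (z c) μ = Measure.map (z c') μ)
    (π : Fin N → ℝ) (hπ : ∀ (c : Fin C) (i : Fin N), (μ {ω | z c ω i = 1}).toReal = π i)
    (w : Fin N → ℝ) :
    ∫ ω, ‖(∑ i, X i) - (1 / (C : ℝ)) • ∑ c, ∑ i, (z c ω i * w i) • X i‖ ^ 2 ∂μ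
      = (∑ i, ‖X i‖ ^ 2)
        + ∑ i, ‖X i‖ ^ 2 * w i * π i *
            (-2 + w i / C + w i * π i * ((C : ℝ) - 1) / C) :=
  collective_estimator_frobenius_discrepancy_general μ hC X horth z hzm hz01 hindep π hπ w
end
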